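/- For all positive definite real symmetric n×n matrices X and Y, the matrix geometric mean is symmetric in its arguments: X^{1/2} (X^{-1/2} Y X^{-1/2})^{1/2} X^{1/2} = Y^{1/2} (Y^{-1/2} X Y^{-1/2})^{1/2} Y^{1/2}; i.e., X # Y = Y # X. -/

import Mathlib

open Matrix BigOperators

/- `msqrt A` is the positive semidefinite square root of `A` (junk value `0` when `A` is
not positive semidefinite). -/
open Classical in
noncomputable def msqrt {n : ℕ} (A : Matrix (Fin n) (Fin n) ℝ) : Matrix (Fin n) (Fin n) ℝ :=
  if h : A.PosSemidef then
    (h.1.eigenvectorUnitary : Matrix (Fin n) (Fin n) ℝ) *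
      diagonal ((↑) ∘ (√·) ∘ h.1.eigenvalues) *
      (star (h.1.eigenvectorUnitary : Matrix (Fin n) (Fin n) ℝ))
  else 0

/- The matrix geometric mean `X # Y = X^{1/2} (X^{-1/2} Y X^{-1/2})^{1/2} X^{1/2}`. -/
noncomputable def gmean {n : ℕ} (X Y : Matrix (Fin n) (Fin n) ℝ) : Matrix (Fin n) (Fin n) ℝ :=
  msqrt X * msqrt (msqrt X⁻¹ * Y * msqrt X⁻¹) * msqrt X

/- Both `X # Y` and `Y # X` are positive solutions `G` of the Riccati equation `G X⁻¹ G = Y`: for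
`X # Y` by direct computation, for `Y # X` by inverting `G Y⁻¹ G = X`. Such a solution is unique:
conjugating by `(X⁻¹)^{1/2}` shows that `(X⁻¹)^{1/2} G (X⁻¹)^{1/2}` is the positive square root of
`(X⁻¹)^{1/2} Y (X⁻¹)^{1/2}`. -/

open scoped MatrixOrder

namespace CFC

variable {A : Type*} [PartialOrder A] [Ring A] [StarRing A] [TopologicalSpace A]
  [StarOrderedRing A] [Algebra ℝ A] [ContinuousFunctionalCalculus ℝ A IsSelfAdjoint]
  [NonnegSpectrumClass ℝ A] [IsSemitopologicalRing A] [T2Space A]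

lemma eq_of_mul_mul_eq_of_nonneg {w a b : A} (hw : IsStrictlyPositive w) (ha : 0 ≤ a)
    (hb : 0 ≤ b) (h : a * w * a = b * w * b) : a = b := by
  set s := sqrt w
  have hs : IsUnit s := hw.sqrt.isUnit
  have hss : s * s = w := sqrt_mul_sqrt_self w hw.nonneg
  have hsq (c : A) : (s * c * s) ^ 2 = s * (c * w * c) * s := by
    rw [sq, ← hss]
    noncomm_ring
  have hconj : s * a * s = s * b * s := by
    rw [← sq_eq_sq_iff _ _ (conjugate_nonneg_of_nonneg ha (sqrt_nonneg w))
      (conjugate_nonneg_of_nonneg hb (sqrt_nonneg w)), hsq, hsq, h]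
  exact hs.mul_left_cancel (hs.mul_right_cancel hconj)

end CFC

namespace Matrix

variable {ι α : Type*} [Fintype ι] [DecidableEq ι] [CommRing α]

lemma mul_mul_inv_mul_mul_eq_of_mul_self_eq {s r x y : Matrix ι ι α} (hs : IsUnit s.det)
    (hx : s * s = x) (hr : r * r = s⁻¹ * y * s⁻¹) : s * r * s * x⁻¹ * (s * r * s) = y := by
  subst hx
  calc s * r * s * (s * s)⁻¹ * (s * r * s) = s * (r * r) * s := by
        simp only [mul_inv_rev, mul_assoc, mul_nonsing_inv_cancel_left _ _ hs,
          nonsing_inv_mul_cancel_left _ _ hs]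
    _ = y := by
        simp only [hr, mul_assoc, mul_nonsing_inv_cancel_left _ _ hs, nonsing_inv_mul _ hs,
          mul_one]

lemma mul_inv_mul_eq_of_mul_inv_mul_eq {g x y : Matrix ι ι α} (hx : IsUnit x.det)
    (hy : IsUnit y.det) (h : g * y⁻¹ * g = x) : g * x⁻¹ * g = y := by
  have hg : IsUnit g.det := by
    rw [← h, det_mul, det_mul] at hx
    exact isUnit_of_mul_isUnit_left (isUnit_of_mul_isUnit_left hx)
  rw [← h, mul_inv_rev, mul_inv_rev, nonsing_inv_nonsing_inv y hy]
  simp only [mul_assoc, mul_nonsing_inv_cancel_left _ _ hg, nonsing_inv_mul _ hg, mul_one]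

open scoped ComplexOrder in
lemma PosSemidef.inv_sqrt_mul_mul_inv_sqrt_nonneg {𝕜 : Type*} [RCLike 𝕜] {A B : Matrix ι ι 𝕜}
    (hA : A.PosSemidef) (hB : B.PosSemidef) :
    0 ≤ (CFC.sqrt A)⁻¹ * B * (CFC.sqrt A)⁻¹ :=
  conjugate_nonneg_of_nonneg hB.nonneg (hA.inv_sqrt ▸ CFC.sqrt_nonneg _)

end Matrix

section GeometricMean

variable {n : ℕ}

lemma msqrt_eq_sqrt {A : Matrix (Fin n) (Fin n) ℝ} (hA : A.PosSemidef) :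
    msqrt A = CFC.sqrt A := by
  rw [CFC.sqrt_eq_cfc, cfc_nnreal_eq_real _ A, hA.1.cfc_eq]
  simp only [msqrt, hA, dif_pos, IsHermitian.cfc, Unitary.conjStarAlgAut_apply]
  congr 3
  ext i
  simp [max_eq_left (hA.eigenvalues_nonneg i)]

lemma gmean_eq_sqrt {X Y : Matrix (Fin n) (Fin n) ℝ} (hX : X.PosDef) (hY : Y.PosSemidef) :
    gmean X Y =
      CFC.sqrt X * CFC.sqrt ((CFC.sqrt X)⁻¹ * Y * (CFC.sqrt X)⁻¹) * CFC.sqrt X := by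
  rw [gmean, msqrt_eq_sqrt hX.posSemidef, msqrt_eq_sqrt hX.inv.posSemidef,
    ← hX.posSemidef.inv_sqrt,
    msqrt_eq_sqrt (hX.posSemidef.inv_sqrt_mul_mul_inv_sqrt_nonneg hY).posSemidef]

lemma gmean_nonneg {X Y : Matrix (Fin n) (Fin n) ℝ} (hX : X.PosDef) (hY : Y.PosSemidef) :
    0 ≤ gmean X Y := by
  rw [gmean_eq_sqrt hX hY]
  exact conjugate_nonneg_of_nonneg (CFC.sqrt_nonneg _) (CFC.sqrt_nonneg _)

lemma gmean_mul_inv_mul_gmean {X Y : Matrix (Fin n) (Fin n) ℝ} (hX : X.PosDef)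
    (hY : Y.PosSemidef) : gmean X Y * X⁻¹ * gmean X Y = Y := by
  have hs : IsUnit (CFC.sqrt X).det :=
    (isUnit_iff_isUnit_det _).mp hX.isStrictlyPositive.sqrt.isUnit
  rw [gmean_eq_sqrt hX hY]
  exact mul_mul_inv_mul_mul_eq_of_mul_self_eq hs (CFC.sqrt_mul_sqrt_self X hX.posSemidef.nonneg)
    (CFC.sqrt_mul_sqrt_self _ (hX.posSemidef.inv_sqrt_mul_mul_inv_sqrt_nonneg hY))

end GeometricMean

theorem stmt8 {n : ℕ} (X Y : Matrix (Fin n) (Fin n) ℝ)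
    (hX : X.PosDef) (hY : Y.PosDef) :
    gmean X Y = gmean Y X := by
  have hXY : gmean X Y * X⁻¹ * gmean X Y = Y := gmean_mul_inv_mul_gmean hX hY.posSemidef
  have hYX : gmean Y X * X⁻¹ * gmean Y X = Y :=
    mul_inv_mul_eq_of_mul_inv_mul_eq ((isUnit_iff_isUnit_det X).mp hX.isUnit)
      ((isUnit_iff_isUnit_det Y).mp hY.isUnit) (gmean_mul_inv_mul_gmean hY hX.posSemidef)
  exact CFC.eq_of_mul_mul_eq_of_nonneg hX.inv.isStrictlyPositive (gmean_nonneg hX hY.posSemidef)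
    (gmean_nonneg hY hX.posSemidef) (hXY.trans hYX.symm)
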